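/- arXiv:2112.15005 — 5 statements merged into one kernel-verified Lean document; each statement's English description precedes it below -/
import Mathlib

section
/- Let 0 ≤ α < 1 and β > 0. Define p(r) = ∫₀^r e^{-βs} (r-s)^{-α} s^{-α} ds for r > 0. Then there exists a constant c > 0 (depending only on α and β) such that p(r) ≤ c · r^{-α} for all r > 0. -/
open MeasureTheory Set

/-!
Split the integrand by which of `s`, `r - s` is at least `r / 2`: where `s ≤ r / 2` the factor
`(r - s) ^ (-α)` is at most `(r / 2) ^ (-α)`; where `s ≥ r / 2` both `s ^ (-α)` and `exp (-β s)`
are dominated by the same expressions at `r - s`. Hence the integrand is at most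
`(r / 2) ^ (-α) (g s + g (r - s))` with `g s = exp (-β s) s ^ (-α)`, whose integral over `[0, r]`
is at most `2 (r / 2) ^ (-α) ∫₀^∞ g = 2 ^ (1 + α) β ^ (α - 1) Γ(1 - α) r ^ (-α)`.
-/

namespace Real

variable {α β : ℝ}

lemma integrableOn_exp_neg_mul_mul_rpow_neg_Ioi (hα : α < 1) (hβ : 0 < β) :
    IntegrableOn (fun s => exp (-β * s) * s ^ (-α)) (Ioi 0) :=
  (integrableOn_rpow_mul_exp_neg_mul_rpow (p := 1) (s := -α) (by linarith) one_pos hβ).congr_fun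
    (fun s _ => by simp only [rpow_one, mul_comm]) measurableSet_Ioi

lemma integral_exp_neg_mul_mul_rpow_neg_Ioi (hα : α < 1) (hβ : 0 < β) :
    ∫ s in Ioi 0, exp (-β * s) * s ^ (-α) = (1 / β) ^ (1 - α) * Gamma (1 - α) := by
  rw [← integral_rpow_mul_exp_neg_mul_Ioi (by linarith) hβ]
  refine setIntegral_congr_fun measurableSet_Ioi fun s _ => ?_
  rw [sub_sub_cancel_left, neg_mul, mul_comm]

lemma intervalIntegral_exp_neg_mul_mul_rpow_neg_le (hα : α < 1) (hβ : 0 < β) {r : ℝ}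
    (hr : 0 ≤ r) :
    ∫ s in (0 : ℝ)..r, exp (-β * s) * s ^ (-α) ≤ (1 / β) ^ (1 - α) * Gamma (1 - α) := by
  rw [intervalIntegral.integral_of_le hr, ← integral_exp_neg_mul_mul_rpow_neg_Ioi hα hβ]
  refine setIntegral_mono_set (integrableOn_exp_neg_mul_mul_rpow_neg_Ioi hα hβ) ?_
    Ioc_subset_Ioi_self.eventuallyLE
  filter_upwards [ae_restrict_mem measurableSet_Ioi] with s hs
  exact mul_nonneg (exp_pos _).le (rpow_nonneg hs.le _)

lemma exp_neg_mul_mul_rpow_neg_mul_rpow_neg_le (hα : 0 ≤ α) (hβ : 0 ≤ β) {r s : ℝ}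
    (hr : 0 < r) (hs : s ∈ Icc 0 r) :
    exp (-β * s) * (r - s) ^ (-α) * s ^ (-α) ≤
      (r / 2) ^ (-α) * (exp (-β * s) * s ^ (-α) + exp (-β * (r - s)) * (r - s) ^ (-α)) := by
  obtain ⟨hs0, hsr⟩ := hs
  have hrs : 0 ≤ r - s := by linarith
  have hterm₁ : 0 ≤ exp (-β * s) * s ^ (-α) := mul_nonneg (exp_pos _).le (rpow_nonneg hs0 _)
  have hterm₂ : 0 ≤ exp (-β * (r - s)) * (r - s) ^ (-α) :=
    mul_nonneg (exp_pos _).le (rpow_nonneg hrs _)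
  rcases le_total s (r / 2) with hs2 | hs2
  · have hsing : (r - s) ^ (-α) ≤ (r / 2) ^ (-α) :=
      rpow_le_rpow_of_nonpos (by positivity) (by linarith) (by linarith)
    calc exp (-β * s) * (r - s) ^ (-α) * s ^ (-α)
        = (r - s) ^ (-α) * (exp (-β * s) * s ^ (-α)) := by ring
      _ ≤ (r / 2) ^ (-α) * (exp (-β * s) * s ^ (-α)) := by gcongr
      _ ≤ _ := by gcongr; linarith
  · have hsing : s ^ (-α) ≤ (r / 2) ^ (-α) :=
      rpow_le_rpow_of_nonpos (by positivity) hs2 (by linarith)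
    have hexp : exp (-β * s) ≤ exp (-β * (r - s)) := exp_le_exp.2 (by nlinarith)
    calc exp (-β * s) * (r - s) ^ (-α) * s ^ (-α)
        ≤ exp (-β * (r - s)) * (r - s) ^ (-α) * (r / 2) ^ (-α) := by gcongr
      _ = (r / 2) ^ (-α) * (exp (-β * (r - s)) * (r - s) ^ (-α)) := by ring
      _ ≤ _ := by gcongr; linarith

end Real

open Real in
theorem stmt0 (α β : ℝ) (hα0 : 0 ≤ α) (hα1 : α < 1) (hβ : 0 < β) :
    ∃ c > 0, ∀ r > 0,
      (∫ s in (0:ℝ)..r, Real.exp (-β * s) * (r - s) ^ (-α) * s ^ (-α)) ≤ c * r ^ (-α) := by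
  have hΓ : 0 < Gamma (1 - α) := Gamma_pos_of_pos (by linarith)
  refine ⟨2 * 2 ^ α * ((1 / β) ^ (1 - α) * Gamma (1 - α)), by positivity, fun r hr => ?_⟩
  set g : ℝ → ℝ := fun s => exp (-β * s) * s ^ (-α)
  have hg : IntervalIntegrable g volume 0 r :=
    (intervalIntegrable_iff_integrableOn_Ioc_of_le hr.le).2
      ((integrableOn_exp_neg_mul_mul_rpow_neg_Ioi hα1 hβ).mono_set Ioc_subset_Ioi_self)
  have hg_refl : IntervalIntegrable (fun s => g (r - s)) volume 0 r := by
    simpa using (hg.comp_sub_left r).symm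
  have hdom : IntervalIntegrable (fun s => (r / 2) ^ (-α) * (g s + g (r - s))) volume 0 r :=
    (hg.add hg_refl).const_mul _
  have hf : IntervalIntegrable (fun s => exp (-β * s) * (r - s) ^ (-α) * s ^ (-α)) volume 0 r := by
    refine hdom.mono_fun' (by fun_prop) ?_
    rw [uIoc_of_le hr.le]
    filter_upwards [ae_restrict_mem measurableSet_Ioc] with s ⟨hs0, hsr⟩
    rw [norm_of_nonneg (mul_nonneg (mul_nonneg (exp_pos _).le (rpow_nonneg (by linarith) _))
      (rpow_nonneg hs0.le _))]
    exact exp_neg_mul_mul_rpow_neg_mul_rpow_neg_le hα0 hβ.le hr ⟨hs0.le, hsr⟩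
  calc (∫ s in (0:ℝ)..r, exp (-β * s) * (r - s) ^ (-α) * s ^ (-α))
      ≤ ∫ s in (0:ℝ)..r, (r / 2) ^ (-α) * (g s + g (r - s)) :=
        intervalIntegral.integral_mono_on hr.le hf hdom fun s hs =>
          exp_neg_mul_mul_rpow_neg_mul_rpow_neg_le hα0 hβ.le hr hs
    _ = 2 * (r / 2) ^ (-α) * ∫ s in (0:ℝ)..r, g s := by
        rw [intervalIntegral.integral_const_mul, intervalIntegral.integral_add hg hg_refl,
          intervalIntegral.integral_comp_sub_left g r, sub_self, sub_zero]
        ring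
    _ ≤ 2 * (r / 2) ^ (-α) * ((1 / β) ^ (1 - α) * Gamma (1 - α)) := by
        gcongr
        exact intervalIntegral_exp_neg_mul_mul_rpow_neg_le hα1 hβ hr.le
    _ = 2 * 2 ^ α * ((1 / β) ^ (1 - α) * Gamma (1 - α)) * r ^ (-α) := by
        rw [div_rpow hr.le zero_le_two, rpow_neg zero_le_two]
        field_simp
end

section
/- Let u : [0,T] → [0,∞) be continuous, 0 ≤ α < 1, N ≥ 0, σ ≥ 0 with u(t) ≤ N + σ ∫₀^t (t-a)^{-α} u(a) da for all t ∈ [0,T]. Then there is a constant k ≥ 1 depending only on α such that u(t) ≤ k N exp( (3/2) (Γ(1-α) σ)^{1/(1-α)} t ) for t ∈ [0,T]. -/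
/-!
Weight `u` by `exp (-λ s)` and let `M ≥ 0` bound `u s * exp (-λ s)` on `[0, T]`,
attained if positive.
Since `∫₀ᵗ (t - a) ^ (-α) * exp (λ a) da ≤ Γ(1 - α) λ ^ (α - 1) exp (λ t)`, the hypothesis gives
`M ≤ N + q M` with `q = σ Γ(1 - α) λ ^ (α - 1)`, hence `M ≤ N / (1 - q)` as soon as `q < 1`.
The choice `λ = (3/2) (Γ(1 - α) σ) ^ (1 / (1 - α))` makes `q = (2/3) ^ (1 - α)`, which depends
only on `α`.
-/

open MeasureTheory Set Real

theorem intervalIntegrable_sub_rpow_neg {α : ℝ} (hα : α < 1) (t : ℝ) :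
    IntervalIntegrable (fun a => (t - a) ^ (-α)) volume 0 t := by
  have h := (intervalIntegral.intervalIntegrable_rpow' (a := 0) (b := t) (r := -α)
    (by linarith)).comp_sub_left t
  simpa using h.symm

theorem integral_rpow_neg_mul_exp_neg_le {α lam t : ℝ} (hα : α < 1) (hlam : 0 < lam)
    (ht : 0 ≤ t) :
    ∫ s in (0:ℝ)..t, s ^ (-α) * exp (-(lam * s)) ≤ Gamma (1 - α) * lam ^ (α - 1) := by
  have hInt : IntegrableOn (fun s : ℝ => s ^ (-α) * exp (-(lam * s))) (Ioi 0) := by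
    simpa [rpow_one, neg_mul] using
      integrableOn_rpow_mul_exp_neg_mul_rpow (s := -α) (p := 1) (by linarith) zero_lt_one hlam
  have hGamma : ∫ s in Ioi (0:ℝ), s ^ (-α) * exp (-(lam * s)) = Gamma (1 - α) * lam ^ (α - 1) := by
    have h := integral_rpow_mul_exp_neg_mul_Ioi (a := 1 - α) (by linarith) hlam
    rw [show (1 - α) - 1 = -α by ring, one_div, inv_rpow hlam.le, ← rpow_neg hlam.le,
      neg_sub] at h
    simpa [mul_comm] using h
  rw [intervalIntegral.integral_of_le ht, ← hGamma]
  refine setIntegral_mono_set hInt ?_ Ioc_subset_Ioi_self.eventuallyLE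
  filter_upwards [ae_restrict_mem measurableSet_Ioi] with s hs
  exact mul_nonneg (rpow_nonneg (le_of_lt hs) _) (exp_pos _).le

theorem integral_sub_rpow_neg_mul_exp_le {α lam t : ℝ} (hα : α < 1) (hlam : 0 < lam)
    (ht : 0 ≤ t) :
    ∫ a in (0:ℝ)..t, (t - a) ^ (-α) * exp (lam * a)
      ≤ Gamma (1 - α) * lam ^ (α - 1) * exp (lam * t) := by
  have hshift : ∀ a : ℝ, (t - a) ^ (-α) * exp (lam * a)
      = exp (lam * t) * ((t - a) ^ (-α) * exp (-(lam * (t - a)))) := by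
    intro a
    rw [show lam * a = lam * t + -(lam * (t - a)) by ring, exp_add]
    ring
  simp_rw [hshift, intervalIntegral.integral_const_mul,
    intervalIntegral.integral_comp_sub_left (fun s => s ^ (-α) * exp (-(lam * s))) t,
    sub_self, sub_zero, mul_comm _ (exp (lam * t))]
  exact mul_le_mul_of_nonneg_left (integral_rpow_neg_mul_exp_neg_le hα hlam ht) (exp_pos _).le

theorem integral_sub_rpow_neg_mul_le_of_le_mul_exp {α lam t M : ℝ} {u : ℝ → ℝ} (hα : α < 1)
    (hlam : 0 < lam) (ht : 0 ≤ t) (hM : 0 ≤ M) (hu : ContinuousOn u (Icc 0 t))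
    (hle : ∀ a ∈ Icc 0 t, u a ≤ M * exp (lam * a)) :
    ∫ a in (0:ℝ)..t, (t - a) ^ (-α) * u a
      ≤ M * (Gamma (1 - α) * lam ^ (α - 1) * exp (lam * t)) := by
  have hker := intervalIntegrable_sub_rpow_neg hα t
  calc ∫ a in (0:ℝ)..t, (t - a) ^ (-α) * u a
      ≤ ∫ a in (0:ℝ)..t, M * ((t - a) ^ (-α) * exp (lam * a)) := by
        refine intervalIntegral.integral_mono_on ht
          (hker.mul_continuousOn (by rwa [uIcc_of_le ht]))
          (IntervalIntegrable.const_mul (hker.mul_continuousOn (by fun_prop)) M) fun a ha => ?_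
        rw [mul_left_comm]
        exact mul_le_mul_of_nonneg_left (hle a ha) (rpow_nonneg (sub_nonneg.2 ha.2) _)
    _ ≤ M * (Gamma (1 - α) * lam ^ (α - 1) * exp (lam * t)) := by
        rw [intervalIntegral.integral_const_mul]
        exact mul_le_mul_of_nonneg_left (integral_sub_rpow_neg_mul_exp_le hα hlam ht) hM

theorem le_mul_exp_of_le_add_integral {α σ N T lam q : ℝ} {u : ℝ → ℝ} (hα : α < 1)
    (hσ : 0 ≤ σ) (hN : 0 ≤ N) (hT : 0 ≤ T) (hlam : 0 < lam)
    (hq : σ * (Gamma (1 - α) * lam ^ (α - 1)) ≤ q) (hq1 : q < 1) (hu : ContinuousOn u (Icc 0 T))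
    (hineq : ∀ t ∈ Icc 0 T, u t ≤ N + σ * ∫ a in (0:ℝ)..t, (t - a) ^ (-α) * u a) :
    ∀ t ∈ Icc 0 T, u t ≤ (1 - q)⁻¹ * N * exp (lam * t) := by
  set w : ℝ → ℝ := fun s => u s * exp (-(lam * s))
  obtain ⟨t₀, ht₀, hmax⟩ : ∃ t₀ ∈ Icc 0 T, IsMaxOn w (Icc 0 T) t₀ :=
    isCompact_Icc.exists_isMaxOn (nonempty_Icc.2 hT) (hu.mul (by fun_prop))
  -- `max _ 0` makes `M` usable in the integral bound without a sign condition on `u`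
  set M := max (w t₀) 0
  have hM0 : 0 ≤ M := le_max_right _ _
  have hbound : ∀ s ∈ Icc 0 T, u s ≤ M * exp (lam * s) := fun s hs => by
    have hw : u s * exp (-(lam * s)) ≤ M := (hmax hs).trans (le_max_left _ _)
    have h := mul_le_mul_of_nonneg_right hw (exp_pos (lam * s)).le
    rwa [mul_assoc, ← exp_add, neg_add_cancel, exp_zero, mul_one] at h
  have hself : w t₀ ≤ N + q * M := by
    have hint := integral_sub_rpow_neg_mul_le_of_le_mul_exp hα hlam ht₀.1 hM0
      (hu.mono (Icc_subset_Icc_right ht₀.2)) fun a ha => hbound a ⟨ha.1, ha.2.trans ht₀.2⟩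
    have hu₀ : u t₀ ≤ N + q * M * exp (lam * t₀) :=
      calc u t₀ ≤ N + σ * (M * (Gamma (1 - α) * lam ^ (α - 1) * exp (lam * t₀))) :=
            (hineq t₀ ht₀).trans (by gcongr)
        _ = N + σ * (Gamma (1 - α) * lam ^ (α - 1)) * M * exp (lam * t₀) := by ring
        _ ≤ N + q * M * exp (lam * t₀) := by gcongr
    have hexp : exp (-(lam * t₀)) ≤ 1 := exp_le_one_iff.2 (by nlinarith [ht₀.1])
    calc w t₀ ≤ (N + q * M * exp (lam * t₀)) * exp (-(lam * t₀)) :=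
          mul_le_mul_of_nonneg_right hu₀ (exp_pos _).le
      _ = N * exp (-(lam * t₀)) + q * M := by
          rw [add_mul, mul_assoc, ← exp_add, add_neg_cancel, exp_zero, mul_one]
      _ ≤ N + q * M := by gcongr; exact mul_le_of_le_one_right hN hexp
  have hM : M ≤ (1 - q)⁻¹ * N := by
    rw [inv_mul_eq_div, le_div_iff₀ (sub_pos.2 hq1)]
    have hΓ : 0 < Gamma (1 - α) := Gamma_pos_of_pos (sub_pos.2 hα)
    have hq0 : 0 ≤ q := le_trans (by positivity) hq
    have : M ≤ N + q * M := max_le hself (by positivity)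
    linarith
  intro t ht
  calc u t ≤ M * exp (lam * t) := hbound t ht
    _ ≤ (1 - q)⁻¹ * N * exp (lam * t) := by gcongr

theorem mul_mul_rpow_one_div_rpow_neg {c r β : ℝ} (hc : 0 < c) (hr : 0 ≤ r) (hβ : β ≠ 0) :
    c * (r * c ^ (1 / β)) ^ (-β) = r ^ (-β) := by
  rw [mul_rpow hr (rpow_nonneg hc.le _), ← rpow_mul hc.le, one_div_mul_eq_div, neg_div, div_self hβ,
    rpow_neg_one, mul_left_comm, mul_inv_cancel₀ hc.ne', mul_one]

theorem stmt7_general (α : ℝ) (hα1 : α < 1) :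
    ∃ k ≥ (1:ℝ), ∀ (T N σ : ℝ) (u : ℝ → ℝ), 0 < T → 0 ≤ N → 0 ≤ σ →
      ContinuousOn u (Icc 0 T) → (∀ t ∈ Icc (0:ℝ) T, 0 ≤ u t) →
      (∀ t ∈ Icc (0:ℝ) T, u t ≤ N + σ * ∫ a in (0:ℝ)..t, (t - a) ^ (-α) * u a) →
      ∀ t ∈ Icc (0:ℝ) T,
        u t ≤ k * N * Real.exp ((3 / 2) * (Real.Gamma (1 - α) * σ) ^ (1 / (1 - α)) * t) := by
  have hβ : 0 < 1 - α := sub_pos.2 hα1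
  set q : ℝ := (3 / 2) ^ (-(1 - α))
  have hq1 : q < 1 := rpow_lt_one_of_one_lt_of_neg (by norm_num) (neg_neg_of_pos hβ)
  have hk : 1 ≤ (1 - q)⁻¹ :=
    one_le_inv₀ (sub_pos.2 hq1) |>.2 (sub_le_self _ (rpow_nonneg (by norm_num) _))
  refine ⟨(1 - q)⁻¹, hk, fun T N σ u hT hN hσ hu _ hineq t ht => ?_⟩
  rcases hσ.eq_or_lt with rfl | hσ
  · rw [mul_zero, zero_rpow (one_div_pos.2 hβ).ne', mul_zero, zero_mul, exp_zero, mul_one]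
    have h := hineq t ht
    rw [zero_mul, add_zero] at h
    exact h.trans (le_mul_of_one_le_left hN hk)
  have hc : 0 < Gamma (1 - α) * σ := mul_pos (Gamma_pos_of_pos hβ) hσ
  refine le_mul_exp_of_le_add_integral hα1 hσ.le hN hT.le (by positivity) (le_of_eq ?_) hq1 hu
    hineq t ht
  rw [← neg_sub 1 α, mul_left_comm, ← mul_assoc]
  exact mul_mul_rpow_one_div_rpow_neg hc (by norm_num) hβ.ne'

theorem stmt7 (α : ℝ) (hα0 : 0 ≤ α) (hα1 : α < 1) :
    ∃ k ≥ (1:ℝ), ∀ (T N σ : ℝ) (u : ℝ → ℝ), 0 < T → 0 ≤ N → 0 ≤ σ →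
      ContinuousOn u (Icc 0 T) → (∀ t ∈ Icc (0:ℝ) T, 0 ≤ u t) →
      (∀ t ∈ Icc (0:ℝ) T, u t ≤ N + σ * ∫ a in (0:ℝ)..t, (t - a) ^ (-α) * u a) →
      ∀ t ∈ Icc (0:ℝ) T,
        u t ≤ k * N * Real.exp ((3 / 2) * (Real.Gamma (1 - α) * σ) ^ (1 / (1 - α)) * t) :=
  stmt7_general α hα1
end

section
/- Let E be a Banach space, Π(a,σ) a family of bounded operators on E with ‖Π(a,σ)‖_{L(E₀,E_α)} ≤ M e^{ϖ(a-σ)} (a-σ)^{-α} for 0 ≤ σ ≤ a, where 0 ≤ α < 1. For v ∈ C([0,T], L¹(J,E₀)) define G_v(t,a) = ∫_{(t-a)₊}^{t} Π(a, a-t+s) v(s, a-t+s) ds. Then ‖G_v(t,·)‖_{L¹(J,E_α)} ≤ c(T) ∫₀^t (t-s)^{-α} ‖v(s)‖_{L¹(J,E₀)} ds for t ∈ [0,T], for some constant c(T) > 0. -/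
/-!
Along the characteristic through `(a, s)` one has `a - σ = t - s`, so the integrand of
`G_v(t, a)` is bounded by `M e^{|ϖ| T} (t - s)^{-α} ‖v(s, a - t + s)‖`. Bounding norms of
integrals by integrals of norms in `ℝ≥0∞` (valid with no measurability, since a non-integrable
Bochner integral is `0`), Tonelli lets one integrate in `a` first, and the shift
`b = a - t + s` carries each characteristic into `(0, am]`, producing `‖v(s)‖_{L¹}`. The weight
`(t - s)^{-α}` is integrable since `α < 1`, and `s ↦ ‖v(s)‖_{L¹}` is continuous, so the final
`ℝ≥0∞`-bound is finite and equals the real right-hand side.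
-/

open MeasureTheory Set

open scoped ENNReal

theorem integral_norm_le_of_lintegral_enorm_le {X E : Type*} [MeasurableSpace X]
    [NormedAddCommGroup E] {μ : Measure X} {f : X → E} {C : ℝ} (hC : 0 ≤ C)
    (h : ∫⁻ x, ‖f x‖ₑ ∂μ ≤ ENNReal.ofReal C) : ∫ x, ‖f x‖ ∂μ ≤ C := by
  refine (Real.le_norm_self _).trans ((norm_integral_le_lintegral_norm _).trans ?_)
  simpa only [norm_norm, ofReal_norm] using ENNReal.toReal_le_of_le_ofReal hC h

theorem enorm_intervalIntegral_le_setLIntegral_Ioo {E : Type*} [NormedAddCommGroup E]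
    [NormedSpace ℝ E] {F : ℝ → E} {b : ℝ → ℝ≥0∞} {u w : ℝ} (huw : u ≤ w)
    (hb : ∀ s ∈ Ioo u w, ‖F s‖ₑ ≤ b s) : ‖∫ s in u..w, F s‖ₑ ≤ ∫⁻ s in Ioo u w, b s := by
  rw [intervalIntegral.integral_of_le huw, ← Measure.restrict_congr_set Ioo_ae_eq_Ioc]
  exact (enorm_integral_le_lintegral_enorm _).trans (setLIntegral_mono' measurableSet_Ioo hb)

theorem lintegral_along_characteristics_le (f : ℝ → ℝ → ℝ≥0∞)
    (hf : Measurable (Function.uncurry f)) (t am : ℝ) :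
    ∫⁻ a in Ioc 0 am, ∫⁻ s in Ioo (max (t - a) 0) t, f s (a - t + s)
      ≤ ∫⁻ s in Ioc 0 t, ∫⁻ b in Ioc 0 am, f s b := by
  set D : Set (ℝ × ℝ) := {p | t - p.1 < p.2}
  set g : ℝ × ℝ → ℝ≥0∞ := D.indicator fun p => f p.2 (p.1 + (p.2 - t))
  have hg : Measurable g :=
    (hf.comp (f := fun p : ℝ × ℝ => (p.2, p.1 + (p.2 - t))) (by fun_prop)).indicator
      (measurableSet_lt (f := fun p : ℝ × ℝ => t - p.1) (by fun_prop) (by fun_prop))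
  have hg_mem {a s : ℝ} (h : t - a < s) : g (a, s) = f s (a + (s - t)) :=
    indicator_of_mem (show (a, s) ∈ D from h) _
  have hg_notMem {a s : ℝ} (h : ¬t - a < s) : g (a, s) = 0 :=
    indicator_of_notMem (show (a, s) ∉ D from h) _
  calc ∫⁻ a in Ioc 0 am, ∫⁻ s in Ioo (max (t - a) 0) t, f s (a - t + s)
      ≤ ∫⁻ a in Ioc 0 am, ∫⁻ s in Ioc 0 t, g (a, s) := by
        refine lintegral_mono fun a => ?_
        rw [← lintegral_indicator measurableSet_Ioo, ← lintegral_indicator measurableSet_Ioc]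
        refine lintegral_mono <| indicator_le' (fun s hs => ?_) fun _ _ => zero_le
        obtain ⟨hta, hs0⟩ := max_lt_iff.1 hs.1
        rw [indicator_of_mem (show s ∈ Ioc 0 t from ⟨hs0, hs.2.le⟩), hg_mem hta,
          show a + (s - t) = a - t + s by ring]
    _ = ∫⁻ s in Ioc 0 t, ∫⁻ a in Ioc 0 am, g (a, s) := lintegral_lintegral_swap hg.aemeasurable
    _ ≤ ∫⁻ s in Ioc 0 t, ∫⁻ b in Ioc 0 am, f s b := by
        refine setLIntegral_mono' measurableSet_Ioc fun s hs => ?_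
        calc ∫⁻ a in Ioc 0 am, g (a, s)
            ≤ ∫⁻ a, (Ioc 0 am).indicator (f s) (a + (s - t)) := by
              rw [← lintegral_indicator measurableSet_Ioc]
              refine lintegral_mono <| indicator_le' (fun a ha => ?_) fun _ _ => zero_le
              by_cases hta : t - a < s
              · rw [hg_mem hta, indicator_of_mem (show a + (s - t) ∈ Ioc 0 am from
                  ⟨by linarith, by linarith [ha.2, hs.2]⟩)]
              · rw [hg_notMem hta]
                exact zero_le
          _ = ∫⁻ b in Ioc 0 am, f s b := by
              rw [lintegral_add_right_eq_self (fun b => (Ioc 0 am).indicator (f s) b),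
                lintegral_indicator measurableSet_Ioc]

section EvolutionOperator

variable {E₀ Eα : Type*} [NormedAddCommGroup E₀] [NormedSpace ℝ E₀]
  [NormedAddCommGroup Eα] [NormedSpace ℝ Eα]
  {P : ℝ → ℝ → (E₀ →L[ℝ] Eα)} {α M ϖ T : ℝ}

theorem norm_apply_le_of_opNorm_le_exp_mul_rpow (hM : 0 ≤ M)
    (hP : ∀ σ a : ℝ, 0 ≤ σ → σ < a → ‖P a σ‖ ≤ M * Real.exp (ϖ * (a - σ)) * (a - σ) ^ (-α))
    {a σ : ℝ} (hσ : 0 ≤ σ) (hσa : σ < a) (haT : a - σ ≤ T) (x : E₀) :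
    ‖P a σ x‖ ≤ M * Real.exp (|ϖ| * T) * (a - σ) ^ (-α) * ‖x‖ := by
  have hexp : Real.exp (ϖ * (a - σ)) ≤ Real.exp (|ϖ| * T) :=
    Real.exp_le_exp.2 <| (mul_le_mul_of_nonneg_right (le_abs_self ϖ) (by linarith)).trans
      (mul_le_mul_of_nonneg_left haT (abs_nonneg ϖ))
  refine (P a σ).le_of_opNorm_le ((hP σ a hσ hσa).trans ?_) x
  gcongr

theorem setLIntegral_enorm_characteristics_le (hM : 0 ≤ M)
    (hP : ∀ σ a : ℝ, 0 ≤ σ → σ < a → ‖P a σ‖ ≤ M * Real.exp (ϖ * (a - σ)) * (a - σ) ^ (-α))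
    {v : ℝ → ℝ → E₀} (hv : StronglyMeasurable (Function.uncurry v)) {t : ℝ} (ht0 : 0 ≤ t)
    (htT : t ≤ T) (am : ℝ) :
    ∫⁻ a in Ioc 0 am, ‖∫ s in (max (t - a) 0)..t, P a (a - t + s) (v s (a - t + s))‖ₑ
      ≤ ∫⁻ s in Ioc 0 t, ENNReal.ofReal (M * Real.exp (|ϖ| * T) * (t - s) ^ (-α)) *
          ∫⁻ b in Ioc 0 am, ‖v s b‖ₑ := by
  set k : ℝ → ℝ≥0∞ := fun s => ENNReal.ofReal (M * Real.exp (|ϖ| * T) * (t - s) ^ (-α))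
  have hk : Measurable k := by fun_prop
  calc ∫⁻ a in Ioc 0 am, ‖∫ s in (max (t - a) 0)..t, P a (a - t + s) (v s (a - t + s))‖ₑ
      ≤ ∫⁻ a in Ioc 0 am, ∫⁻ s in Ioo (max (t - a) 0) t, k s * ‖v s (a - t + s)‖ₑ := by
        refine setLIntegral_mono' measurableSet_Ioc fun a ha => ?_
        refine enorm_intervalIntegral_le_setLIntegral_Ioo (max_le (by linarith [ha.1]) ht0)
          fun s hs => ?_
        obtain ⟨hta, hs0⟩ := max_lt_iff.1 hs.1
        have hbound := norm_apply_le_of_opNorm_le_exp_mul_rpow hM hP (a := a) (σ := a - t + s)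
          (T := T) (by linarith) (by linarith [hs.2]) (by linarith) (v s (a - t + s))
        rw [show a - (a - t + s) = t - s by ring] at hbound
        have hk_nonneg : 0 ≤ M * Real.exp (|ϖ| * T) * (t - s) ^ (-α) :=
          mul_nonneg (by positivity) (Real.rpow_nonneg (by linarith [hs.2]) _)
        rw [← ofReal_norm, ← ofReal_norm, ← ENNReal.ofReal_mul hk_nonneg]
        exact ENNReal.ofReal_le_ofReal hbound
    _ ≤ ∫⁻ s in Ioc 0 t, ∫⁻ b in Ioc 0 am, k s * ‖v s b‖ₑ :=
        lintegral_along_characteristics_le (fun s b => k s * ‖v s b‖ₑ)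
          ((hk.comp measurable_fst).mul hv.enorm) t am
    _ = ∫⁻ s in Ioc 0 t, k s * ∫⁻ b in Ioc 0 am, ‖v s b‖ₑ := by
        simp only [lintegral_const_mul' _ _ ENNReal.ofReal_ne_top, k]

end EvolutionOperator

theorem setLIntegral_ofReal_rpow_mul_eq {α c t : ℝ} (hα1 : α < 1) (hc : 0 ≤ c) (ht : 0 ≤ t)
    {V : ℝ → ℝ} (hV : Continuous V) (hV0 : ∀ s, 0 ≤ V s) :
    ∫⁻ s in Ioc 0 t, ENNReal.ofReal (c * (t - s) ^ (-α)) * ENNReal.ofReal (V s)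
      = ENNReal.ofReal (c * ∫ s in 0..t, (t - s) ^ (-α) * V s) := by
  have hweight : IntervalIntegrable (fun s => (t - s) ^ (-α)) volume 0 t := by
    simpa using ((intervalIntegral.intervalIntegrable_rpow' (a := 0) (b := t)
      (r := -α) (by linarith)).comp_sub_left t).symm
  have hint : IntegrableOn (fun s => c * ((t - s) ^ (-α) * V s)) (Ioc 0 t) :=
    ((hweight.mul_continuousOn hV.continuousOn).const_mul c).1
  rw [← intervalIntegral.integral_const_mul, intervalIntegral.integral_of_le ht,
    ofReal_integral_eq_lintegral_ofReal hint ?_]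
  · refine setLIntegral_congr_fun measurableSet_Ioc fun s hs => ?_
    rw [← mul_assoc, ENNReal.ofReal_mul (mul_nonneg hc (Real.rpow_nonneg (by linarith [hs.2]) _))]
  · filter_upwards [ae_restrict_mem measurableSet_Ioc] with s hs
    exact mul_nonneg hc (mul_nonneg (Real.rpow_nonneg (by linarith [hs.2]) _) (hV0 s))

theorem stmt9_general {E₀ Eα : Type*} [NormedAddCommGroup E₀] [NormedSpace ℝ E₀]
    [NormedAddCommGroup Eα] [NormedSpace ℝ Eα]
    (α M ϖ am T : ℝ) (hα1 : α < 1) (hM : 0 < M) (ham : 0 < am)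
    (P : ℝ → ℝ → (E₀ →L[ℝ] Eα))
    (hP : ∀ σ a : ℝ, 0 ≤ σ → σ < a → ‖P a σ‖ ≤ M * Real.exp (ϖ * (a - σ)) * (a - σ) ^ (-α))
    (v : ℝ → ℝ → E₀) (hv : Continuous (Function.uncurry v)) :
    ∃ c > 0, ∀ t ∈ Icc (0:ℝ) T,
      (∫ a in (0:ℝ)..am, ‖∫ s in (max (t - a) 0)..t, P a (a - t + s) (v s (a - t + s))‖)
        ≤ c * ∫ s in (0:ℝ)..t, (t - s) ^ (-α) * ∫ a in (0:ℝ)..am, ‖v s a‖ := by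
  refine ⟨M * Real.exp (|ϖ| * T), by positivity, fun t ⟨ht0, htT⟩ => ?_⟩
  have hV : Continuous fun s => ∫ a in (0:ℝ)..am, ‖v s a‖ :=
    intervalIntegral.continuous_parametric_intervalIntegral_of_continuous' hv.norm 0 am
  have hV0 (s : ℝ) : 0 ≤ ∫ a in (0:ℝ)..am, ‖v s a‖ :=
    intervalIntegral.integral_nonneg ham.le fun _ _ => norm_nonneg _
  have hL1 (s : ℝ) : ∫⁻ b in Ioc 0 am, ‖v s b‖ₑ = ENNReal.ofReal (∫ a in (0:ℝ)..am, ‖v s a‖) := by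
    rw [intervalIntegral.integral_of_le ham.le, ofReal_integral_norm_eq_lintegral_enorm
      (hv.uncurry_left s).integrableOn_Ioc, eq_comm]
  rw [intervalIntegral.integral_of_le ham.le]
  refine integral_norm_le_of_lintegral_enorm_le (mul_nonneg (by positivity)
    (intervalIntegral.integral_nonneg ht0 fun s hs =>
      mul_nonneg (Real.rpow_nonneg (by linarith [hs.2]) _) (hV0 s))) ?_
  calc _ ≤ _ := setLIntegral_enorm_characteristics_le hM.le hP hv.stronglyMeasurable ht0 htT am
    _ = _ := by
      simp_rw [hL1]
      exact setLIntegral_ofReal_rpow_mul_eq hα1 (by positivity) ht0 hV hV0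

/-- Estimate for `G_v(t,a) = ∫_{(t-a)₊}^t Π(a,a-t+s) v(s,a-t+s) ds` in the
`L¹(J,E_α)`-norm: `‖G_v(t,·)‖ ≤ c(T) ∫₀^t (t-s)^{-α} ‖v(s)‖_{L¹(J,E₀)} ds`. -/
theorem stmt9 {E₀ Eα : Type*} [NormedAddCommGroup E₀] [NormedSpace ℝ E₀]
    [NormedAddCommGroup Eα] [NormedSpace ℝ Eα] [CompleteSpace Eα]
    (α M ϖ am T : ℝ) (hα0 : 0 ≤ α) (hα1 : α < 1) (hM : 0 < M) (ham : 0 < am)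
    (hT : 0 < T)
    (P : ℝ → ℝ → (E₀ →L[ℝ] Eα))
    (hP : ∀ σ a : ℝ, 0 ≤ σ → σ < a → ‖P a σ‖ ≤ M * Real.exp (ϖ * (a - σ)) * (a - σ) ^ (-α))
    (hPc : ∀ x : E₀, Continuous fun p : ℝ × ℝ => P p.1 p.2 x)
    (v : ℝ → ℝ → E₀) (hv : Continuous (Function.uncurry v)) :
    ∃ c > 0, ∀ t ∈ Icc (0:ℝ) T,
      (∫ a in (0:ℝ)..am, ‖∫ s in (max (t - a) 0)..t, P a (a - t + s) (v s (a - t + s))‖)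
        ≤ c * ∫ s in (0:ℝ)..t, (t - s) ^ (-α) * ∫ a in (0:ℝ)..am, ‖v s a‖ :=
  stmt9_general α M ϖ am T hα1 hM ham P hP v hv
end

section
/- Let E₀ be a Banach space, 0 ≤ α < 1, γ, ϖ, μ ∈ ℝ with β := ω + ϖ + μ - γ < 0 for some ω ∈ ℝ. Then for any continuous g : [0,T] → [0,∞), ∫₀^t (t-s)^{-α} e^{-ω(t-s)} ∫₀^s (s-a)^{-α} e^{(ϖ+μ-γ)(s-a)} g(a) da ds ≤ c · e^{-ωt} ∫₀^t (t-a)^{-α} e^{ωa} g(a) da for all t ∈ [0,T], where c depends only on α and |β|. -/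
/-!
With `b = -(ω + ϖ + μ - γ) > 0` one has `e^{-ω(t-s)} e^{(ϖ+μ-γ)(s-a)} = e^{-ωt} e^{ωa} e^{-b(s-a)}`,
so after exchanging the order of integration (Tonelli, for the lower integrals of the norms) it
suffices to bound `k(a, t) = ∫ₐᵗ (t-s)^{-α} (s-a)^{-α} e^{-b(s-a)} ds` by a multiple of `(t-a)^{-α}`.
On the half of `(a, t)` next to `a` the factor `(t-s)^{-α}` is at most `((t-a)/2)^{-α}`; on the
other half `(s-a)^{-α}` is, and `e^{-b(s-a)} ≤ e^{-b(t-s)}`. Hence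
`k(a, t) ≤ 2 ((t-a)/2)^{-α} ∫₀^∞ r^{-α} e^{-br} dr = 2^{α+1} b^{α-1} Γ(1-α) (t-a)^{-α}`.
-/

open MeasureTheory Set Real

lemma lintegral_rpow_mul_exp_neg_mul_Ioi {a b : ℝ} (ha : 0 < a) (hb : 0 < b) :
    ∫⁻ r in Ioi 0, ENNReal.ofReal (r ^ (a - 1) * exp (-(b * r)))
      = ENNReal.ofReal ((1 / b) ^ a * Gamma a) := by
  have hint : IntegrableOn (fun r : ℝ => r ^ (a - 1) * exp (-(b * r))) (Ioi 0) := by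
    simpa [neg_mul] using
      integrableOn_rpow_mul_exp_neg_mul_rpow (by linarith : -1 < a - 1) one_pos hb
  rw [← integral_rpow_mul_exp_neg_mul_Ioi ha hb, ofReal_integral_eq_lintegral_ofReal hint]
  filter_upwards [self_mem_ae_restrict measurableSet_Ioi] with r hr
  exact mul_nonneg (rpow_nonneg hr.le _) (exp_pos _).le

lemma rpow_neg_mul_rpow_neg_mul_exp_le {α b a s t : ℝ} (hα : 0 ≤ α) (hb : 0 ≤ b)
    (has : a < s) (hst : s < t) :
    (t - s) ^ (-α) * ((s - a) ^ (-α) * exp (-(b * (s - a))))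
      ≤ ((t - a) / 2) ^ (-α) * ((s - a) ^ (-α) * exp (-(b * (s - a)))
          + (t - s) ^ (-α) * exp (-(b * (t - s)))) := by
  have hmid : 0 < (t - a) / 2 := by linarith
  have hpos : ∀ x : ℝ, 0 < x → 0 ≤ x ^ (-α) * exp (-(b * x)) := fun x hx =>
    mul_nonneg (rpow_nonneg hx.le _) (exp_pos _).le
  rcases le_total (s - a) ((t - a) / 2) with hs | hs
  · calc (t - s) ^ (-α) * ((s - a) ^ (-α) * exp (-(b * (s - a))))
        ≤ ((t - a) / 2) ^ (-α) * ((s - a) ^ (-α) * exp (-(b * (s - a)))) :=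
          mul_le_mul_of_nonneg_right (rpow_le_rpow_of_nonpos hmid (by linarith) (by linarith))
            (hpos _ (sub_pos.2 has))
      _ ≤ _ := by gcongr; linarith [hpos _ (sub_pos.2 hst)]
  · calc (t - s) ^ (-α) * ((s - a) ^ (-α) * exp (-(b * (s - a))))
        ≤ (t - s) ^ (-α) * (((t - a) / 2) ^ (-α) * exp (-(b * (t - s)))) := by
          gcongr ?_ * (?_ * ?_)
          · exact rpow_le_rpow_of_nonpos hmid hs (by linarith)
          · exact exp_le_exp.2 (by nlinarith)
      _ ≤ _ := by rw [mul_left_comm]; gcongr; linarith [hpos _ (sub_pos.2 has)]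

lemma lintegral_Ioo_rpow_neg_mul_rpow_neg_mul_exp_le {α b : ℝ} (hα : 0 ≤ α) (hb : 0 ≤ b)
    (a t : ℝ) :
    ∫⁻ s in Ioo a t, ENNReal.ofReal ((t - s) ^ (-α) * ((s - a) ^ (-α) * exp (-(b * (s - a)))))
      ≤ ENNReal.ofReal (2 ^ (α + 1) * (t - a) ^ (-α))
          * ∫⁻ r in Ioi 0, ENNReal.ofReal (r ^ (-α) * exp (-(b * r))) := by
  rcases le_or_gt t a with hta | hat
  · simp [Ioo_eq_empty hta.not_gt]
  -- `φ` vanishes off `(0, ∞)`, so its translates `φ (s - a)`, `φ (t - s)` integrate over all of `ℝ`.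
  set φ : ℝ → ENNReal := (Ioi 0).indicator fun r => ENNReal.ofReal (r ^ (-α) * exp (-(b * r)))
  have hφ : Measurable φ := by
    refine Measurable.indicator (Measurable.ennreal_ofReal ?_) measurableSet_Ioi
    fun_prop
  have hD : ((t - a) / 2) ^ (-α) * 2 = 2 ^ (α + 1) * (t - a) ^ (-α) := by
    rw [div_rpow (by linarith) zero_le_two, rpow_neg zero_le_two, rpow_add_one two_ne_zero]
    field_simp
  calc ∫⁻ s in Ioo a t,
        ENNReal.ofReal ((t - s) ^ (-α) * ((s - a) ^ (-α) * exp (-(b * (s - a)))))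
      ≤ ∫⁻ s in Ioo a t, ENNReal.ofReal (((t - a) / 2) ^ (-α)) * (φ (s - a) + φ (t - s)) := by
        refine setLIntegral_mono' measurableSet_Ioo fun s hs => ?_
        simp only [φ, indicator_of_mem (mem_Ioi.2 (sub_pos.2 hs.1)),
          indicator_of_mem (mem_Ioi.2 (sub_pos.2 hs.2))]
        have hsa := sub_pos.2 hs.1
        have hts := sub_pos.2 hs.2
        rw [← ENNReal.ofReal_add (by positivity) (by positivity),
          ← ENNReal.ofReal_mul (rpow_nonneg (by linarith) _)]
        exact ENNReal.ofReal_le_ofReal (rpow_neg_mul_rpow_neg_mul_exp_le hα hb hs.1 hs.2)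
    _ ≤ ∫⁻ s, ENNReal.ofReal (((t - a) / 2) ^ (-α)) * (φ (s - a) + φ (t - s)) :=
        setLIntegral_le_lintegral _ _
    _ = ENNReal.ofReal (((t - a) / 2) ^ (-α)) * 2 * ∫⁻ r, φ r := by
        rw [lintegral_const_mul _ (by fun_prop), lintegral_add_left (by fun_prop),
          lintegral_sub_right_eq_self, lintegral_sub_left_eq_self, mul_assoc, two_mul]
    _ = _ := by
        rw [lintegral_indicator measurableSet_Ioi, ← ENNReal.ofReal_ofNat,
          ← ENNReal.ofReal_mul (by positivity), hD]

lemma lintegral_Icc_rpow_neg_mul_rpow_neg_mul_exp_le {α b : ℝ} (hα0 : 0 ≤ α) (hα1 : α < 1)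
    (hb : 0 < b) (a t : ℝ) :
    ∫⁻ s in Icc a t, ‖(t - s) ^ (-α) * ((s - a) ^ (-α) * exp (-(b * (s - a))))‖ₑ
      ≤ ENNReal.ofReal (2 ^ (α + 1) * ((1 / b) ^ (1 - α) * Gamma (1 - α))) * ‖(t - a) ^ (-α)‖ₑ := by
  rcases lt_or_ge t a with hta | hat
  · simp [Icc_eq_empty_of_lt hta]
  have hK := lintegral_rpow_mul_exp_neg_mul_Ioi (sub_pos.2 hα1) hb
  rw [sub_sub_cancel_left] at hK
  rw [← setLIntegral_congr Ioo_ae_eq_Icc]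
  calc ∫⁻ s in Ioo a t, ‖(t - s) ^ (-α) * ((s - a) ^ (-α) * exp (-(b * (s - a))))‖ₑ
      = ∫⁻ s in Ioo a t,
          ENNReal.ofReal ((t - s) ^ (-α) * ((s - a) ^ (-α) * exp (-(b * (s - a))))) := by
        refine setLIntegral_congr_fun measurableSet_Ioo fun s hs => Real.enorm_of_nonneg ?_
        have := sub_pos.2 hs.1
        have := sub_pos.2 hs.2
        positivity
    _ ≤ ENNReal.ofReal (2 ^ (α + 1) * (t - a) ^ (-α))
          * ENNReal.ofReal ((1 / b) ^ (1 - α) * Gamma (1 - α)) :=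
        hK ▸ lintegral_Ioo_rpow_neg_mul_rpow_neg_mul_exp_le hα0 hb.le a t
    _ = _ := by
        have hta : 0 ≤ (t - a) ^ (-α) := rpow_nonneg (sub_nonneg.2 hat) _
        rw [Real.enorm_of_nonneg hta, ← ENNReal.ofReal_mul (mul_nonneg (by positivity) hta),
          ← ENNReal.ofReal_mul (by positivity)]
        ring_nf

lemma lintegral_Ioc_lintegral_Ioc_swap {t₀ t : ℝ} {f : ℝ → ℝ → ENNReal}
    (hf : AEMeasurable (Function.uncurry f)
      ((volume.restrict (Ioc t₀ t)).prod (volume.restrict (Ioc t₀ t)))) :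
    ∫⁻ s in Ioc t₀ t, ∫⁻ a in Ioc t₀ s, f s a = ∫⁻ a in Ioc t₀ t, ∫⁻ s in Icc a t, f s a := by
  have hinner : ∀ s ∈ Ioc t₀ t,
      ∫⁻ a in Ioc t₀ s, f s a = ∫⁻ a in Ioc t₀ t, (Iic s).indicator (f s) a := by
    intro s hs
    rw [lintegral_indicator measurableSet_Iic, Measure.restrict_restrict measurableSet_Iic,
      Iic_inter_Ioc_of_le hs.2]
  have houter : ∀ a ∈ Ioc t₀ t,
      ∫⁻ s in Ioc t₀ t, (Iic s).indicator (f s) a = ∫⁻ s in Icc a t, f s a := by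
    intro a ha
    have hind : ∀ s, (Iic s).indicator (f s) a = (Ici a).indicator (fun s => f s a) s := by
      intro s
      simp only [indicator, mem_Iic, mem_Ici]
    simp_rw [hind]
    have hset : Ici a ∩ Ioc t₀ t = Icc a t := by
      ext s
      simp only [mem_inter_iff, mem_Ici, mem_Ioc, mem_Icc]
      grind
    rw [lintegral_indicator measurableSet_Ici, Measure.restrict_restrict measurableSet_Ici, hset]
  have hmeas : AEMeasurable (Function.uncurry fun s a => (Iic s).indicator (f s) a)
      ((volume.restrict (Ioc t₀ t)).prod (volume.restrict (Ioc t₀ t))) := by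
    refine (hf.indicator (measurableSet_le measurable_snd measurable_fst)).congr
      (.of_forall fun p => ?_)
    simp only [indicator, mem_ofPred_eq, mem_Iic, Function.uncurry]
  rw [setLIntegral_congr_fun measurableSet_Ioc hinner, lintegral_lintegral_swap hmeas,
    setLIntegral_congr_fun measurableSet_Ioc houter]

lemma lintegral_Ioc_iterated_kernel_le {α ω θ t₀ t : ℝ} (hα0 : 0 ≤ α) (hα1 : α < 1)
    (hωθ : ω + θ < 0) {g : ℝ → ℝ} (hg : AEMeasurable g (volume.restrict (Ioc t₀ t))) :
    ∫⁻ s in Ioc t₀ t, ‖(t - s) ^ (-α) * exp (-ω * (t - s))‖ₑ *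
        ∫⁻ a in Ioc t₀ s, ‖(s - a) ^ (-α) * exp (θ * (s - a)) * g a‖ₑ
      ≤ ENNReal.ofReal (2 ^ (α + 1) * ((1 / -(ω + θ)) ^ (1 - α) * Gamma (1 - α)))
          * ‖exp (-ω * t)‖ₑ * ∫⁻ a in Ioc t₀ t, ‖(t - a) ^ (-α) * exp (ω * a) * g a‖ₑ := by
  obtain ⟨b, hb, rfl⟩ : ∃ b, 0 < b ∧ θ = -ω - b := ⟨-(ω + θ), by linarith, by ring⟩
  rw [show -(ω + (-ω - b)) = b by ring]
  set C := 2 ^ (α + 1) * ((1 / b) ^ (1 - α) * Gamma (1 - α))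
  set kern : ℝ → ℝ → ℝ := fun s a => (t - s) ^ (-α) * ((s - a) ^ (-α) * exp (-(b * (s - a))))
  have hsplit : ∀ s a, ‖(t - s) ^ (-α) * exp (-ω * (t - s))‖ₑ
        * ‖(s - a) ^ (-α) * exp ((-ω - b) * (s - a)) * g a‖ₑ
      = ‖exp (-ω * t)‖ₑ * (‖kern s a‖ₑ * (‖exp (ω * a)‖ₑ * ‖g a‖ₑ)) := by
    intro s a
    have hexp : exp (-ω * (t - s)) * exp ((-ω - b) * (s - a))
        = exp (-ω * t) * exp (-(b * (s - a))) * exp (ω * a) := by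
      simp only [← exp_add]
      ring_nf
    simp only [← enorm_mul, kern]
    congr 1
    linear_combination ((t - s) ^ (-α) * (s - a) ^ (-α) * g a) * hexp
  have hmeas : AEMeasurable (Function.uncurry fun s a =>
      ‖exp (-ω * t)‖ₑ * (‖kern s a‖ₑ * (‖exp (ω * a)‖ₑ * ‖g a‖ₑ)))
      ((volume.restrict (Ioc t₀ t)).prod (volume.restrict (Ioc t₀ t))) := by
    have := hg.enorm.comp_snd (μ := volume.restrict (Ioc t₀ t))
    fun_prop
  calc ∫⁻ s in Ioc t₀ t, ‖(t - s) ^ (-α) * exp (-ω * (t - s))‖ₑ *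
        ∫⁻ a in Ioc t₀ s, ‖(s - a) ^ (-α) * exp ((-ω - b) * (s - a)) * g a‖ₑ
      = ∫⁻ s in Ioc t₀ t, ∫⁻ a in Ioc t₀ s,
          ‖exp (-ω * t)‖ₑ * (‖kern s a‖ₑ * (‖exp (ω * a)‖ₑ * ‖g a‖ₑ)) := by
        simp only [← lintegral_const_mul' _ _ enorm_ne_top, hsplit]
    _ = ∫⁻ a in Ioc t₀ t, ∫⁻ s in Icc a t,
          ‖exp (-ω * t)‖ₑ * (‖kern s a‖ₑ * (‖exp (ω * a)‖ₑ * ‖g a‖ₑ)) :=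
        lintegral_Ioc_lintegral_Ioc_swap hmeas
    _ = ‖exp (-ω * t)‖ₑ * ∫⁻ a in Ioc t₀ t,
          (∫⁻ s in Icc a t, ‖kern s a‖ₑ) * (‖exp (ω * a)‖ₑ * ‖g a‖ₑ) := by
        rw [← lintegral_const_mul' _ _ enorm_ne_top]
        refine lintegral_congr fun a => ?_
        rw [lintegral_const_mul' _ _ enorm_ne_top, lintegral_mul_const _ (by fun_prop)]
    _ ≤ ‖exp (-ω * t)‖ₑ * ∫⁻ a in Ioc t₀ t,
          ENNReal.ofReal C * ‖(t - a) ^ (-α)‖ₑ * (‖exp (ω * a)‖ₑ * ‖g a‖ₑ) := by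
        gcongr with a
        exact lintegral_Icc_rpow_neg_mul_rpow_neg_mul_exp_le hα0 hα1 hb a t
    _ = _ := by
        simp only [enorm_mul, mul_assoc, lintegral_const_mul' _ _ ENNReal.ofReal_ne_top]
        ring

lemma enorm_intervalIntegral_mul_intervalIntegral_le {t₀ t : ℝ} (ht : t₀ ≤ t) (k : ℝ → ℝ)
    (f : ℝ → ℝ → ℝ) :
    ‖∫ s in t₀..t, k s * ∫ a in t₀..s, f s a‖ₑ
      ≤ ∫⁻ s in Ioc t₀ t, ‖k s‖ₑ * ∫⁻ a in Ioc t₀ s, ‖f s a‖ₑ := by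
  rw [intervalIntegral.integral_of_le ht]
  refine (enorm_integral_le_lintegral_enorm _).trans
    (setLIntegral_mono' measurableSet_Ioc fun s hs => ?_)
  rw [enorm_mul, intervalIntegral.integral_of_le hs.1.le]
  gcongr
  exact enorm_integral_le_lintegral_enorm _

lemma integrableOn_Ioc_rpow_neg_mul {α t₀ t : ℝ} (hα : α < 1) (ht : t₀ ≤ t) {f : ℝ → ℝ}
    (hf : ContinuousOn f (Icc t₀ t)) :
    IntegrableOn (fun a => (t - a) ^ (-α) * f a) (Ioc t₀ t) := by
  refine (intervalIntegrable_iff_integrableOn_Ioc_of_le ht).1 ?_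
  have hpow := (intervalIntegral.intervalIntegrable_rpow' (a := 0) (b := t - t₀)
    (by linarith : (-1 : ℝ) < -α)).comp_sub_left t
  rw [sub_zero, sub_sub_cancel] at hpow
  exact hpow.symm.mul_continuousOn (by rwa [uIcc_of_le ht])

lemma lintegral_Ioc_enorm_eq_ofReal_intervalIntegral {t₀ t : ℝ} (ht : t₀ ≤ t) {f : ℝ → ℝ}
    (hf : IntegrableOn f (Ioc t₀ t)) (hf0 : ∀ a ∈ Ioc t₀ t, 0 ≤ f a) :
    ∫⁻ a in Ioc t₀ t, ‖f a‖ₑ = ENNReal.ofReal (∫ a in t₀..t, f a) := by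
  rw [intervalIntegral.integral_of_le ht, ofReal_integral_eq_lintegral_ofReal hf
    ((ae_restrict_iff' measurableSet_Ioc).2 (.of_forall hf0))]
  exact setLIntegral_congr_fun measurableSet_Ioc fun a ha => Real.enorm_of_nonneg (hf0 a ha)

theorem stmt16 (α ω ϖ μ γ : ℝ) (hα0 : 0 ≤ α) (hα1 : α < 1)
    (hβ : ω + ϖ + μ - γ < 0) :
    ∃ c > 0, ∀ T : ℝ, 0 < T → ∀ g : ℝ → ℝ, ContinuousOn g (Icc 0 T) →
      (∀ a ∈ Icc (0:ℝ) T, 0 ≤ g a) →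
      ∀ t ∈ Icc (0:ℝ) T,
        (∫ s in (0:ℝ)..t, (t - s) ^ (-α) * Real.exp (-ω * (t - s)) *
            ∫ a in (0:ℝ)..s, (s - a) ^ (-α) * Real.exp ((ϖ + μ - γ) * (s - a)) * g a)
          ≤ c * Real.exp (-ω * t) * ∫ a in (0:ℝ)..t, (t - a) ^ (-α) * Real.exp (ω * a) * g a := by
  have hb : 0 < -(ω + (ϖ + μ - γ)) := by linarith
  set c := 2 ^ (α + 1) * ((1 / -(ω + (ϖ + μ - γ))) ^ (1 - α) * Gamma (1 - α))
  have hc : 0 < c := by positivity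
  refine ⟨c, hc, fun T _ g hgc hg0 t ht => ?_⟩
  have hgt : ContinuousOn g (Icc 0 t) := hgc.mono (Icc_subset_Icc_right ht.2)
  have hGnn : ∀ a ∈ Icc 0 t, 0 ≤ (t - a) ^ (-α) * exp (ω * a) * g a := fun a ha =>
    mul_nonneg (mul_nonneg (rpow_nonneg (sub_nonneg.2 ha.2) _) (exp_pos _).le)
      (hg0 a ⟨ha.1, ha.2.trans ht.2⟩)
  have hG : IntegrableOn (fun a => (t - a) ^ (-α) * exp (ω * a) * g a) (Ioc 0 t) := by
    refine (integrableOn_Ioc_rpow_neg_mul (f := fun a => exp (ω * a) * g a) hα1 ht.1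
      ((by fun_prop : Continuous fun a => exp (ω * a)).continuousOn.mul hgt)).congr_fun
      (fun a _ => (mul_assoc _ _ _).symm) measurableSet_Ioc
  have hgm : AEMeasurable g (volume.restrict (Ioc 0 t)) :=
    (hgt.mono Ioc_subset_Icc_self).aemeasurable measurableSet_Ioc
  have hce : 0 ≤ c * exp (-ω * t) := (mul_pos hc (exp_pos _)).le
  refine (le_abs_self _).trans ((ENNReal.ofReal_le_ofReal_iff
    (mul_nonneg hce (intervalIntegral.integral_nonneg ht.1 hGnn))).1 ?_)
  rw [← Real.enorm_eq_ofReal_abs, ENNReal.ofReal_mul hce, ENNReal.ofReal_mul hc.le,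
    ← lintegral_Ioc_enorm_eq_ofReal_intervalIntegral ht.1 hG fun a ha => hGnn a ⟨ha.1.le, ha.2⟩,
    ← Real.enorm_of_nonneg (exp_pos _).le]
  exact (enorm_intervalIntegral_mul_intervalIntegral_le ht.1 _ _).trans
    (lintegral_Ioc_iterated_kernel_le hα0 hα1 (by linarith) hgm)
end

section
/- Let E be a Banach space, (T(t))_{t≥0} a strongly continuous semigroup on E with ‖T(t)‖ ≤ N e^{-ωt} for some N ≥ 1, ω > 0, and let R : E → E satisfy ‖R(v)‖ ≤ d(r)‖v‖ whenever ‖v‖ ≤ r, where d : [0,∞) → [0,∞) is increasing with d(0) = 0 and d continuous at 0. Suppose w ∈ C([0,t₁), E) satisfies w(t) = T(t)w₀ + ∫₀^t T(t-s) R(w(s)) ds and ‖w(s)‖ ≤ r on [0,t₁). Then for every ω' ∈ (0,ω) there exists r > 0 small enough and M ≥ 1 such that ‖w(t)‖ ≤ M e^{-ω't} ‖w₀‖ for t ∈ [0,t₁). -/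
/-!
Weighting by `e^{ωt}` turns the variation-of-constants formula into the linear integral
inequality `e^{ωt}‖w t‖ ≤ N d(r) ∫₀ᵗ e^{ωs}‖w s‖ ds + N‖w₀‖`. Gronwall's inequality bounds the
left side by `N‖w₀‖ e^{N d(r) t}`, and choosing `r` so small that `N d(r) < ω - ω'` (possible
since `d` is continuous at `0` with `d 0 = 0`) leaves the decay rate `ω'`.
-/

open MeasureTheory Set Filter Topology Real

theorem exists_pos_mul_lt_of_continuousAt_zero {d : ℝ → ℝ} (hd0 : d 0 = 0)
    (hd : ContinuousAt d 0) (N : ℝ) {ε : ℝ} (hε : 0 < ε) : ∃ r > 0, N * d r < ε := by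
  have hlim : Tendsto (fun r => N * d r) (𝓝[>] 0) (𝓝 0) := by
    simpa [hd0] using (hd.const_mul N).tendsto.mono_left nhdsWithin_le_nhds
  obtain ⟨r, hr, hpos⟩ := ((hlim.eventually (gt_mem_nhds hε)).and self_mem_nhdsWithin).exists
  exact ⟨r, hpos, hr⟩

theorem mul_gronwallBound_zero_add (K ε x : ℝ) :
    K * gronwallBound 0 K ε x + ε = ε * exp (K * x) := by
  rcases eq_or_ne K 0 with rfl | hK
  · simp
  · rw [gronwallBound_of_K_ne_0 hK]
    field_simp
    ring

theorem le_mul_exp_of_le_mul_integral_add {g : ℝ → ℝ} {C A a b : ℝ} (hC : 0 ≤ C) (hab : a ≤ b)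
    (hg : ContinuousOn g (Icc a b))
    (hbound : ∀ τ ∈ Icc a b, g τ ≤ C * (∫ s in a..τ, g s) + A) :
    g b ≤ A * exp (C * (b - a)) := by
  set F : ℝ → ℝ := fun τ => ∫ s in a..τ, g s
  have hF_cont : ContinuousOn F (Icc a b) := by
    simpa [uIcc_of_le hab] using
      intervalIntegral.continuousOn_primitive_interval (μ := volume) (a := a) (b := b)
        (f := g) (by simpa [uIcc_of_le hab] using hg.integrableOn_Icc)
  have hF_deriv : ∀ x ∈ Ico a b, HasDerivWithinAt F (g x) (Ici x) x := by
    intro x hx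
    have hmem : Icc a b ∈ 𝓝[>] x := Icc_mem_nhdsGT_of_mem hx
    exact intervalIntegral.integral_hasDerivWithinAt_right
      ((hg.mono (Icc_subset_Icc_right hx.2.le)).intervalIntegrable_of_Icc hx.1)
      ⟨Icc a b, hmem, hg.aestronglyMeasurable measurableSet_Icc⟩
      ((hg x (Ico_subset_Icc_self hx)).mono_of_mem_nhdsWithin hmem)
  have hF_le : F b ≤ gronwallBound 0 C A (b - a) :=
    le_gronwallBound_of_liminf_deriv_right_le hF_cont
      (fun x hx _ hr => (hF_deriv x hx).liminf_right_slope_le hr) (by simp [F])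
      (fun x hx => hbound x (Ico_subset_Icc_self hx)) b (right_mem_Icc.2 hab)
  calc g b ≤ C * F b + A := hbound b (right_mem_Icc.2 hab)
    _ ≤ C * gronwallBound 0 C A (b - a) + A := by gcongr
    _ = A * exp (C * (b - a)) := mul_gronwallBound_zero_add C A (b - a)

section VariationOfConstants

variable {E : Type*} [NormedAddCommGroup E] [NormedSpace ℝ E] {T : ℝ → E →L[ℝ] E} {N ω δ τ : ℝ}

theorem norm_integral_semigroup_le (hT : ∀ t ≥ (0:ℝ), ‖T t‖ ≤ N * exp (-ω * t)) (hτ : 0 ≤ τ)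
    {f : ℝ → E} {u : ℝ → ℝ} (hf : ∀ s ∈ Icc 0 τ, ‖f s‖ ≤ δ * u s)
    (hu : IntervalIntegrable (fun s => exp (ω * s) * u s) volume 0 τ) :
    ‖∫ s in (0:ℝ)..τ, T (τ - s) (f s)‖
      ≤ N * δ * exp (-ω * τ) * ∫ s in (0:ℝ)..τ, exp (ω * s) * u s := by
  rw [← intervalIntegral.integral_const_mul]
  refine intervalIntegral.norm_integral_le_of_norm_le hτ (ae_of_all _ fun s hs => ?_)
    (hu.const_mul _)
  have hs' : s ∈ Icc 0 τ := Ioc_subset_Icc_self hs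
  have hTs := hT (τ - s) (sub_nonneg.2 hs'.2)
  calc ‖T (τ - s) (f s)‖ ≤ ‖T (τ - s)‖ * ‖f s‖ := (T (τ - s)).le_opNorm _
    _ ≤ N * exp (-ω * (τ - s)) * (δ * u s) :=
        mul_le_mul hTs (hf s hs') (norm_nonneg _) ((norm_nonneg _).trans hTs)
    _ = N * δ * exp (-ω * τ) * (exp (ω * s) * u s) := by
        rw [show -ω * (τ - s) = -ω * τ + ω * s by ring, exp_add]
        ring

theorem exp_mul_norm_variationOfConstants_le (hT : ∀ t ≥ (0:ℝ), ‖T t‖ ≤ N * exp (-ω * t))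
    (hτ : 0 ≤ τ) (x : E) {f : ℝ → E} {u : ℝ → ℝ} (hf : ∀ s ∈ Icc 0 τ, ‖f s‖ ≤ δ * u s)
    (hu : IntervalIntegrable (fun s => exp (ω * s) * u s) volume 0 τ) :
    exp (ω * τ) * ‖T τ x + ∫ s in (0:ℝ)..τ, T (τ - s) (f s)‖
      ≤ N * δ * (∫ s in (0:ℝ)..τ, exp (ω * s) * u s) + N * ‖x‖ := by
  have hx : ‖T τ x‖ ≤ N * exp (-ω * τ) * ‖x‖ :=
    ((T τ).le_opNorm x).trans (mul_le_mul_of_nonneg_right (hT τ hτ) (norm_nonneg _))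
  have hsum := (norm_add_le _ _).trans (add_le_add hx (norm_integral_semigroup_le hT hτ hf hu))
  have hcancel : exp (ω * τ) * exp (-ω * τ) = 1 := by rw [← exp_add]; simp
  calc exp (ω * τ) * ‖T τ x + ∫ s in (0:ℝ)..τ, T (τ - s) (f s)‖
      ≤ exp (ω * τ) * (N * exp (-ω * τ) * ‖x‖
          + N * δ * exp (-ω * τ) * ∫ s in (0:ℝ)..τ, exp (ω * s) * u s) := by gcongr
    _ = N * δ * (∫ s in (0:ℝ)..τ, exp (ω * s) * u s) + N * ‖x‖ := by
        linear_combination (N * ‖x‖ + N * δ * ∫ s in (0:ℝ)..τ, exp (ω * s) * u s) * hcancel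

end VariationOfConstants

theorem stmt18_general {E : Type*} [NormedAddCommGroup E] [NormedSpace ℝ E]
    (T : ℝ → E →L[ℝ] E) (N ω : ℝ) (hN : 1 ≤ N)
    (hT : ∀ t ≥ (0:ℝ), ‖T t‖ ≤ N * Real.exp (-ω * t))
    (R : E → E) (d : ℝ → ℝ) (hd0 : d 0 = 0)
    (hdcont : ContinuousAt d 0) (hdnn : ∀ r ≥ (0:ℝ), 0 ≤ d r)
    (hR : ∀ r ≥ (0:ℝ), ∀ v : E, ‖v‖ ≤ r → ‖R v‖ ≤ d r * ‖v‖) :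
    ∀ ω' ∈ Ioo 0 ω, ∃ r > (0:ℝ), ∃ M ≥ (1:ℝ), ∀ t₁ > (0:ℝ), ∀ (w : ℝ → E) (w₀ : E),
      ContinuousOn w (Ico 0 t₁) →
      (∀ t ∈ Ico (0:ℝ) t₁, w t = T t w₀ + ∫ s in (0:ℝ)..t, T (t - s) (R (w s))) →
      (∀ s ∈ Ico (0:ℝ) t₁, ‖w s‖ ≤ r) →
      ∀ t ∈ Ico (0:ℝ) t₁, ‖w t‖ ≤ M * Real.exp (-ω' * t) * ‖w₀‖ := by
  rintro ω' ⟨-, hω'ω⟩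
  obtain ⟨r, hr, hC⟩ := exists_pos_mul_lt_of_continuousAt_zero hd0 hdcont N (sub_pos.2 hω'ω)
  refine ⟨r, hr, N, hN, fun t₁ _ w w₀ hw hmild hsmall t ⟨ht0, htt₁⟩ => ?_⟩
  set g : ℝ → ℝ := fun s => exp (ω * s) * ‖w s‖
  have hg : ContinuousOn g (Icc 0 t) :=
    ((continuous_exp.comp (continuous_const_mul ω)).continuousOn.mul hw.norm).mono
      (Icc_subset_Ico_right htt₁)
  have hbound : ∀ τ ∈ Icc 0 t, g τ ≤ N * d r * (∫ s in (0:ℝ)..τ, g s) + N * ‖w₀‖ := by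
    intro τ hτ
    have hτ₁ : τ ∈ Ico 0 t₁ := ⟨hτ.1, hτ.2.trans_lt htt₁⟩
    simp only [g]
    rw [hmild τ hτ₁]
    exact exp_mul_norm_variationOfConstants_le hT hτ.1 w₀
      (fun s hs => hR r hr.le _ (hsmall s ⟨hs.1, hs.2.trans_lt hτ₁.2⟩))
      ((hg.mono (Icc_subset_Icc_right hτ.2)).intervalIntegrable_of_Icc hτ.1)
  have hgt := le_mul_exp_of_le_mul_integral_add (mul_nonneg (by linarith) (hdnn r hr.le)) ht0
    hg hbound
  calc ‖w t‖ = exp (-ω * t) * g t := by simp [g, ← mul_assoc, ← exp_add]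
    _ ≤ exp (-ω * t) * (N * ‖w₀‖ * exp (N * d r * (t - 0))) := by gcongr
    _ = N * ‖w₀‖ * exp ((N * d r - ω) * t) := by
        rw [sub_zero, mul_left_comm, ← exp_add]
        ring_nf
    _ ≤ N * exp (-ω' * t) * ‖w₀‖ := by
        rw [mul_right_comm]
        gcongr
        linarith

/-- Simplified (non-singular) principle of linearized stability: an
exponentially decaying semigroup plus a superlinearly small remainder yields
exponential decay of small mild solutions. -/
theorem stmt18 {E : Type*} [NormedAddCommGroup E] [NormedSpace ℝ E] [CompleteSpace E]
    (T : ℝ → E →L[ℝ] E) (N ω : ℝ) (hN : 1 ≤ N) (hω : 0 < ω)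
    (hT : ∀ t ≥ (0:ℝ), ‖T t‖ ≤ N * Real.exp (-ω * t))
    (R : E → E) (d : ℝ → ℝ) (hd0 : d 0 = 0) (hdmono : MonotoneOn d (Ici 0))
    (hdcont : ContinuousAt d 0) (hdnn : ∀ r ≥ (0:ℝ), 0 ≤ d r)
    (hR : ∀ r ≥ (0:ℝ), ∀ v : E, ‖v‖ ≤ r → ‖R v‖ ≤ d r * ‖v‖) :
    ∀ ω' ∈ Ioo 0 ω, ∃ r > (0:ℝ), ∃ M ≥ (1:ℝ), ∀ t₁ > (0:ℝ), ∀ (w : ℝ → E) (w₀ : E),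
      ContinuousOn w (Ico 0 t₁) →
      (∀ t ∈ Ico (0:ℝ) t₁, w t = T t w₀ + ∫ s in (0:ℝ)..t, T (t - s) (R (w s))) →
      (∀ s ∈ Ico (0:ℝ) t₁, ‖w s‖ ≤ r) →
      ∀ t ∈ Ico (0:ℝ) t₁, ‖w t‖ ≤ M * Real.exp (-ω' * t) * ‖w₀‖ :=
  stmt18_general T N ω hN hT R d hd0 hdcont hdnn hR
end
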